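/- Every graph G on n vertices admitting a Δ-disk representation contains a balanced separator S ⊆ V(G) that can be partitioned into two sets V₃ and V₄ such that both G[V₃] and G[V₄] are cliques. -/
import Mathlib

private lemma sq_le_imp {a b : ℝ} (_ : 0 ≤ a) (hb : 0 ≤ b) (h : a ^ 2 ≤ b ^ 2) : a ≤ b := by
  nlinarith

private lemma dist_sq_fin2 (x y : EuclideanSpace ℝ (Fin 2)) :
    dist x y ^ 2 = (x 0 - y 0) ^ 2 + (x 1 - y 1) ^ 2 := by
  rw [EuclideanSpace.dist_eq, Real.sq_sqrt (Finset.sum_nonneg fun i _ => sq_nonneg _)]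
  simp [Fin.sum_univ_two, Real.dist_eq, sq_abs]

private lemma core_ineq {X Y R m u1 u2 : ℝ} (hX : 0 < X) (hY : 0 < Y)
    (hRX : X ≤ R) (hRY : Y ≤ R) (hm : m ^ 2 = X ^ 2 + Y ^ 2 - R ^ 2) (hm0 : 0 ≤ m)
    (hu1 : 0 ≤ u1) (hu2 : 0 ≤ u2) (hu : u1 ^ 2 + u2 ^ 2 = 1) :
    (m * u1 - X) ^ 2 + (m * u2 - Y) ^ 2 ≤ R ^ 2 := by
  have hmX : m ≤ X := by nlinarith
  have hmY : m ≤ Y := by nlinarith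
  have h1 : u1 ≤ 1 := by nlinarith
  have h2 : u2 ≤ 1 := by nlinarith
  have hmain : m ≤ X * u1 + Y * u2 := by
    nlinarith [mul_nonneg (sub_nonneg.mpr hmX) hu1, mul_nonneg (sub_nonneg.mpr hmY) hu2,
      mul_nonneg hm0 (mul_nonneg hu1 (sub_nonneg.mpr h1)),
      mul_nonneg hm0 (mul_nonneg hu2 (sub_nonneg.mpr h2))]
  nlinarith [mul_le_mul_of_nonneg_left hmain hm0]

private lemma disk_meet (p q : EuclideanSpace ℝ (Fin 2)) (rp rq s : ℝ)
    (hp0 : 0 < p 0) (hp1 : 0 < p 1) (hq0 : 0 < q 0) (hq1 : 0 < q 1)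
    (hrp : max (p 0) (p 1) ≤ rp)
    (hs : s ^ 2 = dist p 0 ^ 2 - rp ^ 2) (hs0 : 0 ≤ s)
    (h1 : dist q 0 - rq ≤ s) (h2 : s ≤ dist q 0 + rq) :
    ∃ z, z ∈ Metric.closedBall p rp ∧ z ∈ Metric.closedBall q rq := by
  have hrp0 : 0 < rp := lt_of_lt_of_le (lt_of_lt_of_le hp0 (le_max_left _ _)) hrp
  set nq : ℝ := dist q 0 with hnqdef
  have hnq2 : nq ^ 2 = q 0 ^ 2 + q 1 ^ 2 := by
    rw [hnqdef, dist_sq_fin2]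
    norm_num
  have hnqnn : (0:ℝ) ≤ nq := dist_nonneg
  have hnq : 0 < nq := by nlinarith
  have hnq' : nq ≠ 0 := ne_of_gt hnq
  have hpsq : dist p 0 ^ 2 = p 0 ^ 2 + p 1 ^ 2 := by
    rw [dist_sq_fin2]; norm_num
  refine ⟨(s / nq) • q, ?_, ?_⟩
  · rw [Metric.mem_closedBall]
    have key : ((s/nq) • q) 0 = s * (q 0 / nq) := by
      show (s/nq) * q 0 = _
      ring
    have key1 : ((s/nq) • q) 1 = s * (q 1 / nq) := by
      show (s/nq) * q 1 = _
      ring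
    have hd : dist ((s/nq) • q) p ^ 2 = (s * (q 0 / nq) - p 0) ^ 2 + (s * (q 1 / nq) - p 1) ^ 2 := by
      rw [dist_sq_fin2, key, key1]
    have hcore : (s * (q 0 / nq) - p 0) ^ 2 + (s * (q 1 / nq) - p 1) ^ 2 ≤ rp ^ 2 := by
      refine core_ineq hp0 hp1 (le_trans (le_max_left _ _) hrp) (le_trans (le_max_right _ _) hrp)
        (by rw [hs, hpsq]) hs0 (by positivity) (by positivity) ?_
      field_simp
      linarith [hnq2]
    refine sq_le_imp dist_nonneg (le_of_lt hrp0) ?_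
    rw [hd]; exact hcore
  · rw [Metric.mem_closedBall]
    have hrq0 : 0 ≤ rq := by linarith
    have hd : dist ((s/nq) • q) q ^ 2 = (s - nq) ^ 2 := by
      rw [dist_sq_fin2]
      have e0 : ((s/nq) • q) 0 = (s/nq) * q 0 := rfl
      have e1 : ((s/nq) • q) 1 = (s/nq) * q 1 := rfl
      rw [e0, e1]
      have expand : ((s/nq) * q 0 - q 0) ^ 2 + ((s/nq) * q 1 - q 1) ^ 2
          = (s/nq - 1) ^ 2 * (q 0 ^ 2 + q 1 ^ 2) := by ring
      rw [expand, ← hnq2]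
      have : (s/nq - 1) ^ 2 * nq ^ 2 = ((s/nq - 1) * nq) ^ 2 := by ring
      rw [this]
      congr 1
      field_simp
    refine sq_le_imp dist_nonneg hrq0 ?_
    rw [hd]
    nlinarith



/-- A Δ-disk representation of a simple graph `G`: each vertex `v` gets a
closed disk with center `c v = (x_v, y_v)`, `x_v > 0`, `y_v > 0`, and radius
`r v` with `max x_v y_v ≤ r v < √(x_v² + y_v²)` (the disk meets both axes but
misses the origin); distinct vertices are adjacent iff their disks intersect. -/
def IsDeltaDiskRep {V : Type*} (G : SimpleGraph V)
    (c : V → EuclideanSpace ℝ (Fin 2)) (r : V → ℝ) : Prop :=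
  (∀ v, 0 < c v 0) ∧ (∀ v, 0 < c v 1) ∧
  (∀ v, max (c v 0) (c v 1) ≤ r v) ∧ (∀ v, r v < dist (c v) 0) ∧
  ∀ u v, u ≠ v → (G.Adj u v ↔
    (Metric.closedBall (c u) (r u) ∩ Metric.closedBall (c v) (r v)).Nonempty)

/-- Every Δ-disk graph contains a balanced separator that can be partitioned
into two cliques. -/
theorem deltaDiskGraph_separator_two_cliques
    {V : Type*} [Fintype V] [DecidableEq V] (G : SimpleGraph V)
    (c : V → EuclideanSpace ℝ (Fin 2)) (r : V → ℝ)
    (h : IsDeltaDiskRep G c r) :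
    ∃ S A B : Finset V,
      (∀ v : V, v ∈ S ∨ v ∈ A ∨ v ∈ B) ∧
      Disjoint S A ∧ Disjoint S B ∧ Disjoint A B ∧
      A.card ≤ (Fintype.card V + 1) / 2 ∧ B.card ≤ (Fintype.card V + 1) / 2 ∧
      (∀ a ∈ A, ∀ b ∈ B, ¬ G.Adj a b) ∧
      ∃ V3 V4 : Finset V, V3 ∪ V4 = S ∧ Disjoint V3 V4 ∧
        G.IsClique (V3 : Set V) ∧ G.IsClique (V4 : Set V) := by
  classical
  obtain ⟨hx, hy, hr, hR, hadj⟩ := h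
  rcases isEmpty_or_nonempty V with hV | hV
  · refine ⟨∅, ∅, ∅, fun v => (IsEmpty.false v).elim, by simp, by simp, by simp,
      by simp, by simp, by simp, ∅, ∅, by simp, by simp, by simp, by simp⟩
  -- basic facts
  have hr0 : ∀ v, 0 < r v := fun v =>
    lt_of_lt_of_le (lt_of_lt_of_le (hx v) (le_max_left _ _)) (hr v)
  have hN0 : ∀ v, 0 < dist (c v) 0 := fun v => lt_trans (hr0 v) (hR v)
  set N : V → ℝ := fun v => dist (c v) 0 with hNdef
  set MM : V → ℝ := fun v => N v + r v with hMMdef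
  set mm : V → ℝ := fun v => N v - r v with hmmdef
  set P : V → ℝ := fun v => N v ^ 2 - r v ^ 2 with hPdef
  have hmm0 : ∀ v, 0 < mm v := fun v => sub_pos.mpr (hR v)
  have hMM0 : ∀ v, 0 < MM v := fun v => by have := hN0 v; have := hr0 v; simp only [hMMdef]; linarith
  have hmMle : ∀ v, mm v ≤ MM v := fun v => by have := hr0 v; simp only [hMMdef, hmmdef]; linarith
  have hP0 : ∀ v, 0 < P v := fun v => by
    have h1 := hR v; have h2 := hr0 v
    simp only [hPdef, hNdef]
    nlinarith
  -- choice of the median radius t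
  set n := Fintype.card V with hn
  have hn1 : 1 ≤ n := Fintype.card_pos
  set k := (n + 1) / 2 with hk
  have hk1 : 1 ≤ k := by omega
  set img := Finset.univ.image MM with himgdef
  have himg : img.Nonempty := ⟨MM (Classical.arbitrary V),
    Finset.mem_image_of_mem _ (Finset.mem_univ _)⟩
  set Tset := img.filter (fun x => k ≤ (Finset.univ.filter (fun v => MM v ≤ x)).card)
    with hTsetdef
  have hTne : Tset.Nonempty := by
    refine ⟨img.max' himg, Finset.mem_filter.mpr ⟨Finset.max'_mem _ _, ?_⟩⟩
    have hfull : Finset.univ.filter (fun v => MM v ≤ img.max' himg) = Finset.univ := by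
      refine Finset.filter_true_of_mem fun v _ => ?_
      exact Finset.le_max' _ _ (Finset.mem_image_of_mem _ (Finset.mem_univ _))
    rw [hfull, Finset.card_univ]
    omega
  set t := Tset.min' hTne with htdef
  have htmem : t ∈ Tset := Finset.min'_mem _ _
  have htimg : t ∈ img := (Finset.mem_filter.mp htmem).1
  have htk : k ≤ (Finset.univ.filter (fun v => MM v ≤ t)).card :=
    (Finset.mem_filter.mp htmem).2
  have ht0 : 0 < t := by
    obtain ⟨v0, _, hv0⟩ := Finset.mem_image.mp htimg
    rw [← hv0]; exact hMM0 v0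
  -- the sets
  set A := Finset.univ.filter (fun v => MM v < t) with hAdef
  set B := Finset.univ.filter (fun v => t < mm v) with hBdef
  set V3 := Finset.univ.filter (fun v => (mm v ≤ t ∧ t ≤ MM v) ∧ P v ≤ t ^ 2) with hV3def
  set V4 := Finset.univ.filter (fun v => (mm v ≤ t ∧ t ≤ MM v) ∧ t ^ 2 < P v) with hV4def
  -- cardinality bounds
  have hAcard : A.card < k := by
    by_contra hcon
    push_neg at hcon
    have hFne : A.Nonempty := Finset.card_pos.mp (lt_of_lt_of_le (by omega) hcon)
    have hFimg : (A.image MM).Nonempty := hFne.image MM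
    set x := (A.image MM).max' hFimg with hxdef
    obtain ⟨w, hwF, hwx⟩ := Finset.mem_image.mp ((A.image MM).max'_mem hFimg)
    have hxlt : x < t := by
      rw [hxdef, ← hwx]
      exact (Finset.mem_filter.mp hwF).2
    have hxT : x ∈ Tset := by
      refine Finset.mem_filter.mpr ⟨?_, ?_⟩
      · rw [hxdef, ← hwx]
        exact Finset.mem_image_of_mem _ (Finset.mem_univ _)
      · refine le_trans hcon (Finset.card_le_card ?_)
        intro w' hw'
        refine Finset.mem_filter.mpr ⟨Finset.mem_univ _, ?_⟩
        exact Finset.le_max' _ _ (Finset.mem_image_of_mem _ hw')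
    have := Finset.min'_le Tset x hxT
    rw [← htdef] at this
    linarith
  have hBcard : B.card ≤ n - k := by
    have hsub : B ⊆ (Finset.univ.filter (fun v => MM v ≤ t))ᶜ := by
      intro v hv
      rw [Finset.mem_compl, Finset.mem_filter]
      rintro ⟨-, hle⟩
      have := (Finset.mem_filter.mp hv).2
      have := hmMle v
      linarith
    calc B.card
        ≤ ((Finset.univ.filter (fun v => MM v ≤ t))ᶜ).card := Finset.card_le_card hsub
      _ = n - (Finset.univ.filter (fun v => MM v ≤ t)).card := by
          rw [Finset.card_compl, hn]
      _ ≤ n - k := Nat.sub_le_sub_left htk n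
  -- the sets
  -- common point helper
  have common : ∀ u w : V, mm w ≤ Real.sqrt (P u) → Real.sqrt (P u) ≤ MM w →
      ∃ z, z ∈ Metric.closedBall (c u) (r u) ∧ z ∈ Metric.closedBall (c w) (r w) := by
    intro u w hlo hhi
    refine disk_meet (c u) (c w) (r u) (r w) (Real.sqrt (P u)) (hx u) (hy u) (hx w) (hy w)
      (hr u) ?_ (Real.sqrt_nonneg _) ?_ ?_
    · rw [Real.sq_sqrt (le_of_lt (hP0 u))]
    · simpa only [hmmdef, hNdef] using hlo
    · simpa only [hMMdef, hNdef] using hhi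
  -- sqrt facts
  have hsqrt_mm : ∀ w, mm w ≤ Real.sqrt (P w) := by
    intro w
    refine sq_le_imp (le_of_lt (hmm0 w)) (Real.sqrt_nonneg _) ?_
    rw [Real.sq_sqrt (le_of_lt (hP0 w))]
    have := hR w; have := hr0 w
    simp only [hmmdef, hPdef, hNdef] at *
    nlinarith
  have hsqrt_MM : ∀ w, Real.sqrt (P w) ≤ MM w := by
    intro w
    refine sq_le_imp (Real.sqrt_nonneg _) (le_of_lt (hMM0 w)) ?_
    rw [Real.sq_sqrt (le_of_lt (hP0 w))]
    have := hR w; have := hr0 w; have := hN0 w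
    simp only [hMMdef, hPdef, hNdef] at *
    nlinarith
  -- cliques
  have hclique3 : G.IsClique (V3 : Set V) := by
    rw [SimpleGraph.isClique_iff]
    intro u hu w hw hne
    have hu' := (Finset.mem_filter.mp (Finset.mem_coe.mp hu)).2
    have hw' := (Finset.mem_filter.mp (Finset.mem_coe.mp hw)).2
    have adj : ∀ u' w' : V, u' ≠ w' → ((mm u' ≤ t ∧ t ≤ MM u') ∧ P u' ≤ t ^ 2) →
        ((mm w' ≤ t ∧ t ≤ MM w') ∧ P w' ≤ t ^ 2) → P w' ≤ P u' → G.Adj u' w' := by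
      intro u' w' hne' hu'' hw'' hPle
      have hlo : mm w' ≤ Real.sqrt (P u') :=
        le_trans (hsqrt_mm w') (Real.sqrt_le_sqrt hPle)
      have hhi : Real.sqrt (P u') ≤ MM w' := by
        have h1 : Real.sqrt (P u') ≤ t := by
          have := Real.sqrt_le_sqrt hu''.2
          rwa [Real.sqrt_sq (le_of_lt ht0)] at this
        exact le_trans h1 hw''.1.2
      obtain ⟨z, hz1, hz2⟩ := common u' w' hlo hhi
      exact (hadj u' w' hne').mpr ⟨z, hz1, hz2⟩
    rcases le_total (P w) (P u) with hle | hle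
    · exact adj u w hne hu' hw' hle
    · exact (adj w u (Ne.symm hne) hw' hu' hle).symm
  have hclique4 : G.IsClique (V4 : Set V) := by
    rw [SimpleGraph.isClique_iff]
    intro u hu w hw hne
    have hu' := (Finset.mem_filter.mp (Finset.mem_coe.mp hu)).2
    have hw' := (Finset.mem_filter.mp (Finset.mem_coe.mp hw)).2
    have adj : ∀ u' w' : V, u' ≠ w' → ((mm u' ≤ t ∧ t ≤ MM u') ∧ t ^ 2 < P u') →
        ((mm w' ≤ t ∧ t ≤ MM w') ∧ t ^ 2 < P w') → P u' ≤ P w' → G.Adj u' w' := by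
      intro u' w' hne' hu'' hw'' hPle
      have hlo : mm w' ≤ Real.sqrt (P u') := by
        refine le_trans hw''.1.1 ?_
        have := Real.sqrt_le_sqrt (le_of_lt hu''.2)
        rwa [Real.sqrt_sq (le_of_lt ht0)] at this
      have hhi : Real.sqrt (P u') ≤ MM w' :=
        le_trans (Real.sqrt_le_sqrt hPle) (hsqrt_MM w')
      obtain ⟨z, hz1, hz2⟩ := common u' w' hlo hhi
      exact (hadj u' w' hne').mpr ⟨z, hz1, hz2⟩
    rcases le_total (P u) (P w) with hle | hle
    · exact adj u w hne hu' hw' hle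
    · exact (adj w u (Ne.symm hne) hw' hu' hle).symm
  -- assemble
  refine ⟨V3 ∪ V4, A, B, ?_, ?_, ?_, ?_, ?_, ?_, ?_, V3, V4, rfl, ?_, hclique3, hclique4⟩
  · -- coverage
    intro v
    rcases lt_or_ge (MM v) t with hlt | hge
    · exact Or.inr (Or.inl (Finset.mem_filter.mpr ⟨Finset.mem_univ _, hlt⟩))
    rcases lt_or_ge t (mm v) with hlt2 | hge2
    · exact Or.inr (Or.inr (Finset.mem_filter.mpr ⟨Finset.mem_univ _, hlt2⟩))
    rcases le_or_gt (P v) (t ^ 2) with hle | hgt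
    · exact Or.inl (Finset.mem_union_left _
        (Finset.mem_filter.mpr ⟨Finset.mem_univ _, ⟨hge2, hge⟩, hle⟩))
    · exact Or.inl (Finset.mem_union_right _
        (Finset.mem_filter.mpr ⟨Finset.mem_univ _, ⟨hge2, hge⟩, hgt⟩))
  · -- Disjoint S A
    rw [Finset.disjoint_left]
    intro v hv hvA
    have h1 := (Finset.mem_filter.mp hvA).2
    rcases Finset.mem_union.mp hv with hv3 | hv4
    · have := ((Finset.mem_filter.mp hv3).2).1.2; linarith
    · have := ((Finset.mem_filter.mp hv4).2).1.2; linarith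
  · -- Disjoint S B
    rw [Finset.disjoint_left]
    intro v hv hvB
    have h1 := (Finset.mem_filter.mp hvB).2
    rcases Finset.mem_union.mp hv with hv3 | hv4
    · have := ((Finset.mem_filter.mp hv3).2).1.1; linarith
    · have := ((Finset.mem_filter.mp hv4).2).1.1; linarith
  · -- Disjoint A B
    rw [Finset.disjoint_left]
    intro v hvA hvB
    have h1 := (Finset.mem_filter.mp hvA).2
    have h2 := (Finset.mem_filter.mp hvB).2
    have := hmMle v
    linarith
  · -- |A|
    omega
  · -- |B|
    omega
  · -- no A-B edges
    intro a haA b hbB hab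
    have h1 := (Finset.mem_filter.mp haA).2
    have h2 := (Finset.mem_filter.mp hbB).2
    have hne : a ≠ b := by
      intro hEq
      rw [hEq] at h1
      have := hmMle b
      linarith
    obtain ⟨z, hz⟩ := (hadj a b hne).mp hab
    have hz1 : dist z (c a) ≤ r a := Metric.mem_closedBall.mp hz.1
    have hz2 : dist z (c b) ≤ r b := Metric.mem_closedBall.mp hz.2
    have t1 : dist (c b) 0 ≤ dist (c b) z + dist z 0 := dist_triangle _ _ _
    have t2 : dist z 0 ≤ dist z (c a) + dist (c a) 0 := dist_triangle _ _ _
    have hcb : dist (c b) z = dist z (c b) := dist_comm _ _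
    simp only [hmmdef, hMMdef, hNdef] at h1 h2
    linarith
  · -- Disjoint V3 V4
    rw [Finset.disjoint_left]
    intro v hv3 hv4
    have h1 := ((Finset.mem_filter.mp hv3).2).2
    have h2 := ((Finset.mem_filter.mp hv4).2).2
    linarith
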